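/- arXiv:1904.08055 — 3 statements merged into one kernel-verified Lean document; each statement's English description precedes it below -/
import Mathlib

section
/- Let x₀ > 0, 0 < X* < x₀, m ≥ 1/3 and k ≥ 1/(m+1), and set δ(x) = (X* − x)^k. Let w : [0,X*)×[0,∞) → ℝ be continuous, C¹ in x and C² in ψ on (0,X*)×(0,∞), satisfying ∂ₓw − √w ∂_ψ²w = −2 on (0,X*)×(0,∞), with w(x,0) = 0, ∂_ψ w ≥ 0 and ∂_ψ w continuous on [0,X*)×[0,∞) and bounded on compact subsets, and 0 ≤ w(x,ψ) ≤ 2(x₀ − x) for all (x,ψ). Then there exists a positive constant c, depending only on k and m, such that for every x̄ ∈ [0,X*) there exist x̃ ∈ [x̄, X*) and ψ_x̃ ∈ [0, δ(x̃)) with ∂_ψ w(x̃, ψ_x̃) ≥ c (X* − x̃)^{km}. -/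
open Set Filter

/-- `pdx f x y` is the partial derivative of `f` in its first (x) variable. -/
noncomputable def pdx (f : ℝ → ℝ → ℝ) (x y : ℝ) : ℝ := deriv (fun t => f t y) x

/-- `pdy f x y` is the partial derivative of `f` in its second (y) variable. -/
noncomputable def pdy (f : ℝ → ℝ → ℝ) (x y : ℝ) : ℝ := deriv (f x) y

/-- second partial derivative in the second variable. -/
noncomputable def pdyy (f : ℝ → ℝ → ℝ) (x y : ℝ) : ℝ := deriv (deriv (f x)) y

/-- third partial derivative in the second variable. -/
noncomputable def pdyyy (f : ℝ → ℝ → ℝ) (x y : ℝ) : ℝ := deriv (deriv (deriv (f x))) y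

lemma second_deriv_nonneg_of_isLocalMin {f : ℝ → ℝ} {a : ℝ}
    (hf : ∀ᶠ x in nhds a, DifferentiableAt ℝ f x)
    (hf' : DifferentiableAt ℝ (deriv f) a)
    (hmin : IsLocalMin f a) : 0 ≤ deriv (deriv f) a := by
  by_contra hneg
  push_neg at hneg
  have h0 : deriv f a = 0 := hmin.deriv_eq_zero
  have hd : HasDerivAt (deriv f) (deriv (deriv f) a) a := hf'.hasDerivAt
  have hslope : Tendsto (slope (deriv f) a) (nhdsWithin a (Ioi a)) (nhds (deriv (deriv f) a)) :=
    (hasDerivAt_iff_tendsto_slope.mp hd).mono_left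
      (nhdsWithin_mono _ (fun x hx => ne_of_gt hx))
  have hev : ∀ᶠ x in nhdsWithin a (Ioi a), deriv f x < 0 := by
    filter_upwards [hslope.eventually_lt_const hneg, self_mem_nhdsWithin] with x hx hx'
    rw [slope_def_field, h0, sub_zero] at hx
    by_contra hge
    push_neg at hge
    have : 0 ≤ deriv f x / (x - a) := div_nonneg hge (by linarith [mem_Ioi.mp hx'])
    linarith
  obtain ⟨u, hu, huIoo⟩ := mem_nhdsGT_iff_exists_Ioo_subset.mp hev
  have hmin' : ∀ᶠ x in nhds a, f a ≤ f x := hmin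
  obtain ⟨ε, hε, hball⟩ := Metric.eventually_nhds_iff.mp (hf.and hmin')
  set v := min u (a + ε / 2) with hv
  have hau : a < u := mem_Ioi.mp hu
  have hav : a < v := lt_min hau (by linarith)
  have hmem : ∀ y ∈ Icc a v, DifferentiableAt ℝ f y ∧ f a ≤ f y := by
    intro y hy
    apply hball
    rw [Real.dist_eq, abs_of_nonneg (by linarith [hy.1])]
    have h1 : y ≤ a + ε / 2 := le_trans hy.2 (min_le_right _ _)
    linarith
  have hcont : ContinuousOn f (Icc a v) :=
    fun y hy => ((hmem y hy).1.continuousAt).continuousWithinAt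
  have hanti : StrictAntiOn f (Icc a v) := by
    apply strictAntiOn_of_deriv_neg (convex_Icc a v) hcont
    intro x hx
    rw [interior_Icc] at hx
    exact huIoo ⟨hx.1, lt_of_lt_of_le hx.2 (min_le_left _ _)⟩
  have h2 := hanti (left_mem_Icc.mpr hav.le) (right_mem_Icc.mpr hav.le) hav
  exact absurd h2 (not_lt.mpr (hmem v (right_mem_Icc.mpr hav.le)).2)

lemma deriv_nonpos_of_min_left {f : ℝ → ℝ} {a x : ℝ} (hax : a < x)
    (hf : DifferentiableAt ℝ f x) (hmin : ∀ y ∈ Icc a x, f x ≤ f y) :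
    deriv f x ≤ 0 := by
  have hslope : Tendsto (slope f x) (nhdsWithin x (Iio x)) (nhds (deriv f x)) :=
    (hasDerivAt_iff_tendsto_slope.mp hf.hasDerivAt).mono_left
      (nhdsWithin_mono _ (fun y hy => ne_of_lt hy))
  have hev : ∀ᶠ y in nhdsWithin x (Iio x), slope f x y ≤ 0 := by
    filter_upwards [((eventually_gt_nhds hax).filter_mono nhdsWithin_le_nhds),
      self_mem_nhdsWithin] with y hy hy'
    rw [slope_def_field]
    apply div_nonpos_of_nonneg_of_nonpos
    · have := hmin y ⟨hy.le, (mem_Iio.mp hy').le⟩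
      linarith
    · linarith [mem_Iio.mp hy']
  exact le_of_tendsto hslope hev

lemma le_linear_of_deriv_le {f : ℝ → ℝ} {b D : ℝ} (hb : 0 < b) (hf0 : f 0 = 0)
    (hc : ContinuousOn f (Icc 0 b))
    (hd : ∀ s ∈ Ioo 0 b, DifferentiableAt ℝ f s)
    (hD : ∀ s ∈ Ioo 0 b, deriv f s ≤ D) :
    ∀ q ∈ Icc 0 b, f q ≤ D * q := by
  intro q hq
  have hanti : AntitoneOn (fun s => f s - D * s) (Icc 0 b) := by
    apply antitoneOn_of_deriv_nonpos (convex_Icc 0 b)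
    · exact hc.sub (Continuous.continuousOn (by fun_prop))
    · intro s hs
      rw [interior_Icc] at hs
      exact ((hd s hs).sub (by fun_prop)).differentiableWithinAt
    · intro s hs
      rw [interior_Icc] at hs
      have h2 : HasDerivAt (fun s : ℝ => D * s) D s := by
        simpa using (hasDerivAt_id s).const_mul D
      rw [deriv_fun_sub (hd s hs) h2.differentiableAt, h2.deriv]
      linarith [hD s hs]
  have h3 := hanti (left_mem_Icc.mpr hb.le) hq hq.1
  simp only [hf0, mul_zero, sub_zero, zero_sub] at h3
  linarith

set_option maxHeartbeats 1000000 in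
/-- Lower bound lemma for the Von Mises equation `∂ₓw − √w ∂_ψ²w = −2`: there
are points `(x̃, ψ_x̃)` with `ψ_x̃ < (X* − x̃)^k`, arbitrarily close to `X*`, at
which `∂_ψ w ≥ c (X* − x̃)^{km}`, with `c` depending only on `k` and `m`. -/
theorem von_mises_lower_bound (m k : ℝ) (hm : (1:ℝ)/3 ≤ m) (hk : 1/(m+1) ≤ k) :
    ∃ c > (0:ℝ), ∀ (x₀ Xs : ℝ) (w : ℝ → ℝ → ℝ),
      0 < Xs → Xs < x₀ →
      ContinuousOn (fun q : ℝ × ℝ => w q.1 q.2) (Ico (0:ℝ) Xs ×ˢ Ici (0:ℝ)) →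
      (∀ x ∈ Ioo (0:ℝ) Xs, ∀ q ∈ Ioi (0:ℝ), DifferentiableAt ℝ (fun t => w t q) x) →
      (∀ x ∈ Ioo (0:ℝ) Xs, ∀ q ∈ Ioi (0:ℝ), DifferentiableAt ℝ (w x) q) →
      (∀ x ∈ Ioo (0:ℝ) Xs, ∀ q ∈ Ioi (0:ℝ), DifferentiableAt ℝ (deriv (w x)) q) →
      (∀ x ∈ Ioo (0:ℝ) Xs, ∀ q ∈ Ioi (0:ℝ),
        pdx w x q - Real.sqrt (w x q) * pdyy w x q = -2) →
      (∀ x ∈ Ico (0:ℝ) Xs, w x 0 = 0) →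
      (∀ x ∈ Ico (0:ℝ) Xs, ∀ q ∈ Ici (0:ℝ), 0 ≤ pdy w x q) →
      ContinuousOn (fun q : ℝ × ℝ => pdy w q.1 q.2) (Ico (0:ℝ) Xs ×ˢ Ici (0:ℝ)) →
      (∀ K : Set (ℝ × ℝ), IsCompact K → K ⊆ Ico (0:ℝ) Xs ×ˢ Ici (0:ℝ) →
        ∃ M : ℝ, ∀ q ∈ K, |pdy w q.1 q.2| ≤ M) →
      (∀ x ∈ Ico (0:ℝ) Xs, ∀ q ∈ Ici (0:ℝ), 0 ≤ w x q ∧ w x q ≤ 2 * (x₀ - x)) →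
      ∀ xb ∈ Ico (0:ℝ) Xs, ∃ xt ∈ Ico xb Xs, ∃ qt ∈ Ico (0:ℝ) ((Xs - xt) ^ k),
        c * (Xs - xt) ^ (k * m) ≤ pdy w xt qt := by
  have hm0 : (0:ℝ) < m := lt_of_lt_of_le (by norm_num) hm
  have hm1 : (0:ℝ) < m + 1 := by linarith only [hm0]
  have hk0 : (0:ℝ) < k := lt_of_lt_of_le (by positivity) hk
  have hkm0 : (0:ℝ) < k * m := mul_pos hk0 hm0
  have hkm1 : (1:ℝ) ≤ k * (m + 1) := by
    rw [div_le_iff₀ hm1] at hk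
    linarith only [hk]
  refine ⟨(2:ℝ) ^ (-(k*m)) / 8, by positivity, ?_⟩
  intro x₀ Xs w hXs hXx₀ hwc hdx hdq hdqq hPDE hw0 hpdy0 hpdyc hpdyK hwb xb hxb
  by_contra hcon
  push_neg at hcon
  -- geometric setup
  set L : ℝ := min 1 ((Xs - xb)/2) with hLdef
  have hL0 : 0 < L := lt_min one_pos (by linarith only [hxb.2])
  have hL1 : L ≤ 1 := min_le_left _ _
  have hL2 : 2 * L ≤ Xs - xb := by
    have := min_le_right 1 ((Xs - xb)/2)
    have hL : L ≤ (Xs - xb)/2 := this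
    linarith only [hL]
  set D : ℝ := L ^ (k*m) / 8 with hDdef
  set b : ℝ := L ^ k / 2 with hbdef
  have hLk0 : (0:ℝ) < L ^ k := Real.rpow_pos_of_pos hL0 k
  have hLkm0 : (0:ℝ) < L ^ (k*m) := Real.rpow_pos_of_pos hL0 (k*m)
  have hb0 : 0 < b := by rw [hbdef]; positivity
  have hD0 : 0 < D := by rw [hDdef]; positivity
  set τ : ℝ := D * b with hτdef
  have hτ0 : 0 < τ := mul_pos hD0 hb0
  have hτeq : τ = L ^ (k*m + k) / 16 := by
    rw [hτdef, hDdef, hbdef, Real.rpow_add hL0]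
    ring
  have hτL : τ ≤ L / 16 := by
    rw [hτeq]
    have h1 : L ^ (k*m + k) ≤ L ^ (1:ℝ) :=
      Real.rpow_le_rpow_of_exponent_ge hL0 hL1 (by linarith only [hkm1])
    rw [Real.rpow_one] at h1
    linarith only [h1]
  set x₁ : ℝ := Xs - L with hx₁def
  set x₂ : ℝ := x₁ - τ with hx₂def
  have hx₂xb : xb < x₂ := by rw [hx₂def, hx₁def]; linarith only [hL2, hτL, hL0]
  have hx₂0 : 0 < x₂ := lt_of_le_of_lt hxb.1 hx₂xb
  have hx₁Xs : x₁ < Xs := by rw [hx₁def]; linarith only [hL0]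
  have hx₂x₁ : x₂ < x₁ := by rw [hx₂def]; linarith only [hτ0]
  -- rectangle facts
  have hxfacts : ∀ x ∈ Icc x₂ x₁, x ∈ Ioo (0:ℝ) Xs ∧ x ∈ Ico xb Xs ∧
      L ≤ Xs - x ∧ Xs - x ≤ 2 * L := by
    intro x hx
    obtain ⟨h1, h2⟩ := hx
    rw [hx₂def, hx₁def] at h1
    rw [hx₁def] at h2
    refine ⟨⟨?_, ?_⟩, ⟨?_, ?_⟩, ?_, ?_⟩
    · linarith only [h1, hx₂0, hx₂def, hx₁def]
    · linarith only [h2, hL0]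
    · linarith only [h1, hx₂xb, hx₂def, hx₁def]
    · linarith only [h2, hL0]
    · linarith only [h2]
    · linarith only [h1, hτL, hL0]
  have hbk : b < L ^ k := by rw [hbdef]; linarith only [hLk0]
  -- pdy bound on the rectangle
  have keyD : ∀ x ∈ Icc x₂ x₁, ∀ q ∈ Icc 0 b, pdy w x q < D := by
    intro x hx q hq
    obtain ⟨hIoo, hIco, hXl, hXu⟩ := hxfacts x hx
    have hXx0 : (0:ℝ) < Xs - x := by linarith only [hIoo.2]
    have hq2' : q < (Xs - x) ^ k := by
      calc q ≤ b := hq.2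
        _ < L ^ k := hbk
        _ ≤ (Xs - x) ^ k := Real.rpow_le_rpow hL0.le hXl hk0.le
    have hlt := hcon x hIco q ⟨hq.1, hq2'⟩
    have hmono : (Xs - x) ^ (k*m) ≤ (2*L) ^ (k*m) :=
      Real.rpow_le_rpow hXx0.le hXu hkm0.le
    have h2L : ((2:ℝ)*L) ^ (k*m) = 2 ^ (k*m) * L ^ (k*m) :=
      Real.mul_rpow (by norm_num) hL0.le
    have h22 : (2:ℝ) ^ (-(k*m)) * (2:ℝ) ^ (k*m) = 1 := by
      rw [← Real.rpow_add two_pos]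
      norm_num
    calc pdy w x q < (2:ℝ) ^ (-(k*m)) / 8 * (Xs - x) ^ (k*m) := hlt
      _ ≤ (2:ℝ) ^ (-(k*m)) / 8 * ((2*L) ^ (k*m)) := by
          apply mul_le_mul_of_nonneg_left hmono (by positivity)
      _ = ((2:ℝ) ^ (-(k*m)) * (2:ℝ) ^ (k*m)) * L ^ (k*m) / 8 := by rw [h2L]; ring
      _ = D := by rw [h22, hDdef]; ring
  -- slice continuity
  have hslice : ∀ x ∈ Icc x₂ x₁, ContinuousOn (w x) (Icc 0 b) := by
    intro x hx
    obtain ⟨hIoo, _, _, _⟩ := hxfacts x hx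
    have hmap : MapsTo (fun q : ℝ => (x, q)) (Icc 0 b) (Ico (0:ℝ) Xs ×ˢ Ici (0:ℝ)) := by
      intro q hq
      exact ⟨⟨hIoo.1.le, hIoo.2⟩, hq.1⟩
    exact (hwc.comp (Continuous.continuousOn (by fun_prop)) hmap : _)
  -- wedge bound
  have keyW : ∀ x ∈ Icc x₂ x₁, ∀ q ∈ Icc 0 b, w x q ≤ D * q := by
    intro x hx
    obtain ⟨hIoo, hIco, _, _⟩ := hxfacts x hx
    apply le_linear_of_deriv_le hb0 (hw0 x ⟨hIoo.1.le, hIoo.2⟩) (hslice x hx)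
    · intro s hs
      exact hdq x hIoo s hs.1
    · intro s hs
      exact (keyD x hx s ⟨hs.1.le, hs.2.le⟩).le
  -- the barrier and the minimum point
  set Z : ℝ × ℝ → ℝ := fun p =>
    D * p.2 - (p.1 - x₂) * ((4/b^2) * (p.2 * (b - p.2))) - w p.1 p.2 with hZdef
  set R : Set (ℝ × ℝ) := Icc x₂ x₁ ×ˢ Icc 0 b with hRdef
  have hRsub : R ⊆ Ico (0:ℝ) Xs ×ˢ Ici (0:ℝ) := by
    intro p hp
    obtain ⟨hIoo, _, _, _⟩ := hxfacts p.1 hp.1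
    exact ⟨⟨hIoo.1.le, hIoo.2⟩, hp.2.1⟩
  have hZc : ContinuousOn Z R := by
    apply ContinuousOn.sub
    · exact Continuous.continuousOn (by fun_prop)
    · exact hwc.mono hRsub
  have hRne : R.Nonempty := ⟨(x₂, 0), ⟨⟨le_refl _, hx₂x₁.le⟩, ⟨le_refl _, hb0.le⟩⟩⟩
  obtain ⟨⟨xs, qs⟩, hpmR, hpmin⟩ :=
    (isCompact_Icc.prod isCompact_Icc).exists_isMinOn hRne hZc
  have hZmin : ∀ p ∈ R, Z (xs, qs) ≤ Z p := fun p hp => hpmin hp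
  rcases lt_or_ge (Z (xs, qs)) 0 with hneg | hpos
  · -- interior minimum analysis
    have hxsIcc : xs ∈ Icc x₂ x₁ := hpmR.1
    have hqsIcc : qs ∈ Icc 0 b := hpmR.2
    obtain ⟨hxsIoo, hxsIco, _, _⟩ := hxfacts xs hxsIcc
    -- qs ≠ 0
    have hqs0 : 0 < qs := by
      rcases lt_or_eq_of_le hqsIcc.1 with h | h
      · exact h
      · exfalso
        have : Z (xs, 0) = 0 := by
          simp only [hZdef]
          rw [hw0 xs ⟨hxsIoo.1.le, hxsIoo.2⟩]
          ring
        rw [← h] at hneg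
        linarith only [this, hneg]
    -- qs ≠ b
    have hqsb : qs < b := by
      rcases lt_or_eq_of_le hqsIcc.2 with h | h
      · exact h
      · exfalso
        have hwle := keyW xs hxsIcc b ⟨hb0.le, le_refl _⟩
        have : Z (xs, b) = D * b - w xs b := by
          simp only [hZdef]
          ring
        rw [h] at hneg
        rw [this] at hneg
        linarith only [hwle, hneg]
    -- xs ≠ x₂
    have hxs2 : x₂ < xs := by
      rcases lt_or_eq_of_le hxsIcc.1 with h | h
      · exact h
      · exfalso
        have hwle := keyW x₂ ⟨le_refl _, hx₂x₁.le⟩ qs hqsIcc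
        have : Z (x₂, qs) = D * qs - w x₂ qs := by
          simp only [hZdef]
          ring
        rw [← h] at hneg
        rw [this] at hneg
        linarith only [hwle, hneg]
    have hqsIoi : qs ∈ Ioi (0:ℝ) := hqs0
    -- the x-direction: pdx w xs qs ≥ -C with C ≤ 1
    have hC0 : 0 ≤ (4/b^2) * (qs * (b - qs)) := by
      have := hqs0.le
      have := hqsb.le
      have : 0 ≤ qs * (b - qs) := mul_nonneg hqs0.le (by linarith only [hqsb])
      positivity
    have hC1 : (4/b^2) * (qs * (b - qs)) ≤ 1 := by
      rw [div_mul_eq_mul_div, div_le_one (by positivity)]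
      linarith only [sq_nonneg (b - 2*qs)]
    have hf1min : ∀ y ∈ Icc x₂ xs,
        (fun x => D * qs - (x - x₂) * ((4/b^2) * (qs * (b - qs))) - w x qs) xs ≤
        (fun x => D * qs - (x - x₂) * ((4/b^2) * (qs * (b - qs))) - w x qs) y := by
      intro y hy
      exact hZmin (y, qs) ⟨⟨hy.1, le_trans hy.2 hxsIcc.2⟩, hqsIcc⟩
    have hθ1 : HasDerivAt (fun x : ℝ => D * qs - (x - x₂) * ((4/b^2) * (qs * (b - qs))))
        (-((4/b^2) * (qs * (b - qs)))) xs := by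
      have h1 := ((hasDerivAt_id xs).sub_const x₂).mul_const ((4/b^2) * (qs * (b - qs)))
      have h2 := (hasDerivAt_const xs (D * qs)).fun_sub h1
      exact h2.congr_deriv (by ring)
    have hdwx := hdx xs hxsIoo qs hqsIoi
    have hf1diff : DifferentiableAt ℝ
        (fun x => D * qs - (x - x₂) * ((4/b^2) * (qs * (b - qs))) - w x qs) xs :=
      hθ1.differentiableAt.sub hdwx
    have hd1 : deriv (fun x => D * qs - (x - x₂) * ((4/b^2) * (qs * (b - qs))) - w x qs) xs ≤ 0 :=
      deriv_nonpos_of_min_left hxs2 hf1diff hf1min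
    have hd1' : deriv (fun x => D * qs - (x - x₂) * ((4/b^2) * (qs * (b - qs))) - w x qs) xs =
        -((4/b^2) * (qs * (b - qs))) - pdx w xs qs := by
      rw [deriv_fun_sub hθ1.differentiableAt hdwx, hθ1.deriv]
      rfl
    have hpdx_ge : -1 ≤ pdx w xs qs := by
      rw [hd1'] at hd1
      linarith only [hd1, hC1]
    -- the q-direction second derivative
    have ht0 : 0 < xs - x₂ := by linarith only [hxs2]
    have htτ : xs - x₂ ≤ τ := by
      have h5 := hxsIcc.2
      rw [hx₂def]
      linarith only [h5]
    have hf2ev : ∀ᶠ q in nhds qs, DifferentiableAt ℝ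
        (fun q => D * q - (xs - x₂) * ((4/b^2) * (q * (b - q))) - w xs q) q := by
      filter_upwards [Ioi_mem_nhds hqs0] with q hq
      exact DifferentiableAt.sub (by fun_prop) (hdq xs hxsIoo q hq)
    have hloc : IsLocalMin (fun q => D * q - (xs - x₂) * ((4/b^2) * (q * (b - q))) - w xs q) qs := by
      have : ∀ᶠ q in nhds qs,
          (fun q => D * q - (xs - x₂) * ((4/b^2) * (q * (b - q))) - w xs q) qs ≤
          (fun q => D * q - (xs - x₂) * ((4/b^2) * (q * (b - q))) - w xs q) q := by
        filter_upwards [Ioo_mem_nhds hqs0 hqsb] with q hq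
        exact hZmin (xs, q) ⟨hxsIcc, ⟨hq.1.le, hq.2.le⟩⟩
      exact this
    have hθq : ∀ q : ℝ, HasDerivAt (fun q : ℝ => D * q - (xs - x₂) * ((4/b^2) * (q * (b - q))))
        (D - (xs - x₂) * ((4/b^2) * (b - 2*q))) q := by
      intro q
      have h1 : HasDerivAt (fun q : ℝ => q * (b - q)) (b - 2*q) q := by
        have h0 := (hasDerivAt_id q).fun_mul ((hasDerivAt_const q b).fun_sub (hasDerivAt_id q))
        simp only [id_eq] at h0
        exact h0.congr_deriv (by ring)
      have h2 := (h1.const_mul ((4:ℝ)/b^2)).const_mul (xs - x₂)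
      have h3 := ((hasDerivAt_id q).const_mul D).fun_sub h2
      exact h3.congr_deriv (by ring)
    have hderiv_eq : Set.EqOn
        (deriv (fun q => D * q - (xs - x₂) * ((4/b^2) * (q * (b - q))) - w xs q))
        (fun q => (D - (xs - x₂) * ((4/b^2) * (b - 2*q))) - deriv (w xs) q) (Ioi 0) := by
      intro q hq
      exact ((hθq q).sub (hdq xs hxsIoo q hq).hasDerivAt).deriv
    have hEv : deriv (fun q => D * q - (xs - x₂) * ((4/b^2) * (q * (b - q))) - w xs q)
        =ᶠ[nhds qs] (fun q => (D - (xs - x₂) * ((4/b^2) * (b - 2*q))) - deriv (w xs) q) :=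
      eventually_of_mem (Ioi_mem_nhds hqs0) hderiv_eq
    have hdf2' : DifferentiableAt ℝ
        (fun q => (D - (xs - x₂) * ((4/b^2) * (b - 2*q))) - deriv (w xs) q) qs :=
      DifferentiableAt.sub (by fun_prop) (hdqq xs hxsIoo qs hqsIoi)
    have hdf2 : DifferentiableAt ℝ
        (deriv (fun q => D * q - (xs - x₂) * ((4/b^2) * (q * (b - q))) - w xs q)) qs :=
      (Filter.EventuallyEq.differentiableAt_iff hEv).mpr hdf2'
    have h2nd := second_deriv_nonneg_of_isLocalMin hf2ev hdf2 hloc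
    have hder2 : deriv (deriv (fun q => D * q - (xs - x₂) * ((4/b^2) * (q * (b - q))) - w xs q)) qs
        = deriv (fun q => (D - (xs - x₂) * ((4/b^2) * (b - 2*q))) - deriv (w xs) q) qs :=
      hEv.deriv_eq
    have hθ2 : HasDerivAt (fun q : ℝ => D - (xs - x₂) * ((4/b^2) * (b - 2*q)))
        ((xs - x₂) * (8/b^2)) qs := by
      have h1 : HasDerivAt (fun q : ℝ => b - 2*q) (-2) qs := by
        have h0 := (hasDerivAt_const qs b).fun_sub ((hasDerivAt_id qs).const_mul (2:ℝ))
        simp only [id_eq] at h0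
        exact h0.congr_deriv (by ring)
      have h2 := (h1.const_mul ((4:ℝ)/b^2)).const_mul (xs - x₂)
      have h3 := (hasDerivAt_const qs D).fun_sub h2
      exact h3.congr_deriv (by ring)
    have hder3 : deriv (fun q => (D - (xs - x₂) * ((4/b^2) * (b - 2*q))) - deriv (w xs) q) qs
        = (xs - x₂) * (8/b^2) - pdyy w xs qs := by
      rw [deriv_fun_sub hθ2.differentiableAt (hdqq xs hxsIoo qs hqsIoi), hθ2.deriv]
      rfl
    have hpdyy_le : pdyy w xs qs ≤ (xs - x₂) * (8/b^2) := by
      rw [hder2, hder3] at h2nd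
      linarith only [h2nd]
    have hpdyy_le' : pdyy w xs qs ≤ τ * (8/b^2) := by
      apply le_trans hpdyy_le
      apply mul_le_mul_of_nonneg_right htτ (by positivity)
    -- combine with the PDE
    have hPDEat := hPDE xs hxsIoo qs hqsIoi
    have hge1 : 1 ≤ Real.sqrt (w xs qs) * pdyy w xs qs := by
      have h6 : Real.sqrt (w xs qs) * pdyy w xs qs = pdx w xs qs + 2 := by
        linarith only [hPDEat]
      linarith only [h6, hpdx_ge]
    -- upper bound on sqrt(w) * pdyy
    have hw_le : w xs qs ≤ D * b := by
      have h1 := keyW xs hxsIcc qs hqsIcc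
      exact h1.trans (mul_le_mul_of_nonneg_left hqsb.le hD0.le)
    have hsq : Real.sqrt (w xs qs) ≤ Real.sqrt (D * b) := Real.sqrt_le_sqrt hw_le
    have hsqval : Real.sqrt (D * b) = L ^ ((k*m + k)/2) / 4 := by
      have h2 : L ^ ((k*m + k)/2) * L ^ ((k*m + k)/2) = L ^ (k*m + k) := by
        rw [← Real.rpow_add hL0]
        ring_nf
      have h16 : D * b = (L ^ ((k*m + k)/2) / 4)^2 := by
        rw [← hτdef, hτeq]
        rw [show (L ^ ((k*m + k)/2) / 4)^2 = (L ^ ((k*m + k)/2) * L ^ ((k*m + k)/2))/16 by ring, h2]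
      rw [h16, Real.sqrt_sq (by positivity)]
    have hfin : Real.sqrt (D * b) * (τ * (8/b^2)) ≤ 1/2 := by
      rw [hsqval, hτeq, hbdef]
      have hE : L ^ ((k*m + k)/2 + (k*m + k) - (k + k)) =
          L ^ ((k*m + k)/2) * L ^ (k*m + k) / (L ^ k * L ^ k) := by
        rw [Real.rpow_sub hL0, Real.rpow_add hL0, Real.rpow_add hL0, Real.rpow_add hL0]
      have hEeq : L ^ ((k*m + k)/2) / 4 * (L ^ (k*m + k) / 16 * (8/(L ^ k / 2)^2)) =
          L ^ ((k*m + k)/2 + (k*m + k) - (k + k)) / 2 := by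
        rw [hE]
        field_simp
        ring
      rw [hEeq]
      have hEnn : (0:ℝ) ≤ (k*m + k)/2 + (k*m + k) - (k + k) := by
        have h3m : (0:ℝ) ≤ k*(3*m-1) := mul_nonneg hk0.le (by linarith only [hm])
        linarith only [h3m]
      have h7 := Real.rpow_le_one hL0.le hL1 hEnn
      linarith only [h7]
    have hchain : Real.sqrt (w xs qs) * pdyy w xs qs ≤ Real.sqrt (D * b) * (τ * (8/b^2)) := by
      rcases le_or_gt (pdyy w xs qs) 0 with hle | hgt
      · apply le_trans (mul_nonpos_of_nonneg_of_nonpos (Real.sqrt_nonneg _) hle)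
        positivity
      · apply mul_le_mul hsq hpdyy_le' hgt.le (Real.sqrt_nonneg _)
    linarith only [hge1, hchain, hfin]
  · -- minimum nonnegative: evaluate at (x₁, b/2)
    have hmem : (x₁, b/2) ∈ R := ⟨⟨hx₂x₁.le, le_refl _⟩, ⟨by positivity, by linarith only [hb0]⟩⟩
    have h1 := hZmin (x₁, b/2) hmem
    have hcenter : (4/b^2) * ((b/2) * (b - b/2)) = 1 := by
      field_simp
      ring
    have h2 : Z (x₁, b/2) = D * b / 2 - τ - w x₁ (b/2) := by
      simp only [hZdef]
      rw [show x₁ - x₂ = τ by rw [hx₂def]; ring]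
      rw [hcenter]
      ring
    have hwpos : 0 ≤ w x₁ (b/2) := (hwb x₁ ⟨by linarith only [hx₂0, hx₂x₁], hx₁Xs⟩ (b/2)
      (mem_Ici.mpr (by positivity))).1
    rw [← hτdef] at h2
    have h3 : Z (x₁, b/2) ≤ -τ/2 := by rw [h2]; linarith only [hwpos]
    have h4 := hpos.trans (h1.trans h3)
    rw [neg_div] at h4
    exact absurd h4 (not_le.mpr (neg_neg_of_pos (half_pos hτ0)))
end

section
/- There exists a universal constant C > 0 with the following property. Let x₀ > 0, 0 < X ≤ x₀, and let w : [0,X)×[0,∞) → ℝ be continuous, C¹ in x and C² in ψ on (0,X)×(0,∞), satisfying ∂ₓw − √w ∂_ψ²w = −2 on (0,X)×(0,∞), with w(x,0) = 0, ∂_ψ w ≥ 0 with ∂_ψ w continuous on [0,X)×[0,∞) and bounded on compact subsets, and 0 ≤ w(x,ψ) ≤ 2(x₀ − x) for all (x,ψ). Then for every x ∈ [0,X) and every δ > 0: x ≤ (δ/2) · sup_{0 ≤ ψ ≤ δ} ∂_ψ w(0,ψ) + C x₀^{5/2}/δ². -/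
open Set Filter

/-- Second derivative test at a local minimum. -/
lemma aux_second_deriv_nonneg {f : ℝ → ℝ} {a : ℝ}
    (hmin : IsLocalMin f a)
    (hdiff : ∀ᶠ z in nhds a, DifferentiableAt ℝ f z)
    (hd2 : DifferentiableAt ℝ (deriv f) a) :
    0 ≤ deriv (deriv f) a := by
  by_contra hq
  push_neg at hq
  have hfa : deriv f a = 0 := hmin.deriv_eq_zero
  have H : Tendsto (slope (deriv f) a) (nhdsWithin a {a}ᶜ) (nhds (deriv (deriv f) a)) :=
    hasDerivAt_iff_tendsto_slope.mp hd2.hasDerivAt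
  have hev : ∀ᶠ z in nhdsWithin a {a}ᶜ, slope (deriv f) a z < deriv (deriv f) a / 2 :=
    H.eventually_lt_const (by linarith)
  have hsub : Ioi a ⊆ {a}ᶜ := fun z hz => by
    simp only [mem_compl_singleton_iff]
    exact ne_of_gt hz
  have hev' : ∀ᶠ z in nhdsWithin a (Ioi a), slope (deriv f) a z < deriv (deriv f) a / 2 :=
    hev.filter_mono (nhdsWithin_mono a hsub)
  rw [eventually_nhdsWithin_iff] at hev'
  have hall : ∀ᶠ z in nhds a,
      ((z ∈ Ioi a → slope (deriv f) a z < deriv (deriv f) a / 2) ∧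
       DifferentiableAt ℝ f z) ∧ f a ≤ f z :=
    (hev'.and hdiff).and (hmin : ∀ᶠ z in nhds a, f a ≤ f z)
  obtain ⟨ε, hε, hball⟩ := Metric.eventually_nhds_iff.mp hall
  set b := a + ε / 2 with hbdef
  have hab : a < b := by simp [hbdef]; linarith
  have hIcc : ∀ z ∈ Icc a b, dist z a < ε := by
    intro z hz
    rw [Real.dist_eq, abs_of_nonneg (by linarith [hz.1])]
    have := hz.2
    simp only [hbdef] at this
    linarith
  have hdiffIcc : ∀ z ∈ Icc a b, DifferentiableAt ℝ f z :=
    fun z hz => (hball (hIcc z hz)).1.2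
  obtain ⟨c, hc, hceq⟩ := exists_hasDerivAt_eq_slope f (deriv f) hab
    (fun z hz => (hdiffIcc z hz).continuousAt.continuousWithinAt)
    (fun z hz => (hdiffIcc z (Ioo_subset_Icc_self hz)).hasDerivAt)
  have hfb : f a ≤ f b := (hball (hIcc b ⟨le_of_lt hab, le_refl b⟩)).2
  have h1 : 0 ≤ deriv f c := by
    rw [hceq]
    exact div_nonneg (by linarith) (by linarith)
  have h2 : slope (deriv f) a c < deriv (deriv f) a / 2 :=
    (hball (hIcc c (Ioo_subset_Icc_self hc))).1.1 hc.1
  rw [slope_def_field, hfa, sub_zero] at h2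
  have hca : 0 < c - a := by linarith [hc.1]
  have h3 : deriv f c < (deriv (deriv f) a / 2) * (c - a) := by
    rw [div_lt_iff₀ hca] at h2
    linarith
  nlinarith

/-- At a point which is a minimum approached from the left, the derivative is nonpositive. -/
lemma aux_deriv_nonpos_left_min {f : ℝ → ℝ} {b : ℝ} (hb : 0 < b)
    (hd : DifferentiableAt ℝ f b)
    (hmin : ∀ t ∈ Ioo (0:ℝ) b, f b ≤ f t) : deriv f b ≤ 0 := by
  have H : Tendsto (slope f b) (nhdsWithin b {b}ᶜ) (nhds (deriv f b)) :=
    hasDerivAt_iff_tendsto_slope.mp hd.hasDerivAt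
  have H' : Tendsto (slope f b) (nhdsWithin b (Iio b)) (nhds (deriv f b)) :=
    H.mono_left (nhdsWithin_mono b (fun z hz => ne_of_lt hz))
  refine le_of_tendsto H' ?_
  filter_upwards [Ioo_mem_nhdsLT hb] with t ht
  rw [slope_def_field]
  exact div_nonpos_of_nonneg_of_nonpos (by linarith [hmin t ht]) (by linarith [ht.2])

set_option maxHeartbeats 4000000 in
/-- Key estimate for separation: for the Von Mises equation with `∂ₓp ≡ 1`,
`x ≤ (δ/2) sup_{0≤ψ≤δ} ∂_ψ w(0,ψ) + C x₀^{5/2}/δ²` with a universal `C`. -/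
theorem separation_key_estimate :
    ∃ C > (0:ℝ), ∀ (x₀ X : ℝ) (w : ℝ → ℝ → ℝ),
      0 < x₀ → 0 < X → X ≤ x₀ →
      ContinuousOn (fun q : ℝ × ℝ => w q.1 q.2) (Ico (0:ℝ) X ×ˢ Ici (0:ℝ)) →
      (∀ x ∈ Ioo (0:ℝ) X, ∀ q ∈ Ioi (0:ℝ), DifferentiableAt ℝ (fun t => w t q) x) →
      (∀ x ∈ Ioo (0:ℝ) X, ∀ q ∈ Ioi (0:ℝ), DifferentiableAt ℝ (w x) q) →
      (∀ x ∈ Ioo (0:ℝ) X, ∀ q ∈ Ioi (0:ℝ), DifferentiableAt ℝ (deriv (w x)) q) →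
      (∀ x ∈ Ioo (0:ℝ) X, ∀ q ∈ Ioi (0:ℝ),
        pdx w x q - Real.sqrt (w x q) * pdyy w x q = -2) →
      (∀ x ∈ Ico (0:ℝ) X, w x 0 = 0) →
      (∀ x ∈ Ico (0:ℝ) X, ∀ q ∈ Ici (0:ℝ), 0 ≤ pdy w x q) →
      ContinuousOn (fun q : ℝ × ℝ => pdy w q.1 q.2) (Ico (0:ℝ) X ×ˢ Ici (0:ℝ)) →
      (∀ K : Set (ℝ × ℝ), IsCompact K → K ⊆ Ico (0:ℝ) X ×ˢ Ici (0:ℝ) →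
        ∃ M : ℝ, ∀ q ∈ K, |pdy w q.1 q.2| ≤ M) →
      (∀ x ∈ Ico (0:ℝ) X, ∀ q ∈ Ici (0:ℝ), 0 ≤ w x q ∧ w x q ≤ 2 * (x₀ - x)) →
      ∀ x ∈ Ico (0:ℝ) X, ∀ δ > (0:ℝ),
        x ≤ δ / 2 * sSup ((fun q => pdy w 0 q) '' Icc (0:ℝ) δ) +
          C * x₀ ^ ((5:ℝ)/2) / δ ^ 2 := by
  refine ⟨64, by norm_num, ?_⟩
  intro x₀ X w hx₀ hX hXx₀ hwc hdx hdy hdyy hpde hw0 hpdy_nonneg hpdyc _hcompact hbounds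
  intro x hx δ hδ
  set S := sSup ((fun q => pdy w 0 q) '' Icc (0:ℝ) δ) with hSdef
  clear_value S
  have hx0 : 0 ≤ x := hx.1
  have hxX : x < X := hx.2
  have hxx₀ : x ≤ x₀ := le_of_lt (lt_of_lt_of_le hxX hXx₀)
  -- basic facts about S
  have hpdyc0 : ContinuousOn (fun q : ℝ => pdy w 0 q) (Icc (0:ℝ) δ) := by
    have hmaps : MapsTo (fun q : ℝ => ((0:ℝ), q)) (Icc (0:ℝ) δ) (Ico (0:ℝ) X ×ˢ Ici (0:ℝ)) :=
      fun q hq => ⟨⟨le_refl 0, hX⟩, hq.1⟩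
    exact hpdyc.comp ((continuous_const.prodMk continuous_id).continuousOn) hmaps
  have hSbdd : BddAbove ((fun q => pdy w 0 q) '' Icc (0:ℝ) δ) :=
    isCompact_Icc.bddAbove_image hpdyc0
  have hSle : ∀ q ∈ Icc (0:ℝ) δ, pdy w 0 q ≤ S := by
    intro q hq
    rw [hSdef]
    exact le_csSup hSbdd ⟨q, hq, rfl⟩
  have hSnn : 0 ≤ S := by
    have h0 : 0 ≤ pdy w 0 0 := hpdy_nonneg 0 ⟨le_refl 0, hX⟩ 0 (Set.mem_Ici.mpr (le_refl 0))
    have := hSle 0 ⟨le_refl 0, le_of_lt hδ⟩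
    linarith
  -- square root abbreviations
  set R := Real.sqrt x₀ with hRdef
  clear_value R
  have hRpos : 0 < R := by rw [hRdef]; exact Real.sqrt_pos.mpr hx₀
  have hR2 : R ^ 2 = x₀ := by rw [hRdef]; exact Real.sq_sqrt hx₀.le
  have hRrpow : R = x₀ ^ ((1:ℝ)/2) := by rw [hRdef]; exact Real.sqrt_eq_rpow x₀
  have h32 : x₀ ^ ((3:ℝ)/2) = R ^ 3 := by
    rw [hRrpow, ← Real.rpow_natCast (x₀ ^ ((1:ℝ)/2)) 3, ← Real.rpow_mul hx₀.le]
    norm_num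
  have h52 : x₀ ^ ((5:ℝ)/2) = R ^ 5 := by
    rw [hRrpow, ← Real.rpow_natCast (x₀ ^ ((1:ℝ)/2)) 5, ← Real.rpow_mul hx₀.le]
    norm_num
  set s2 := Real.sqrt 2 with hs2def
  clear_value s2
  have hs2nn : 0 ≤ s2 := by rw [hs2def]; exact Real.sqrt_nonneg 2
  have hs2sq : s2 ^ 2 = 2 := by rw [hs2def]; exact Real.sq_sqrt (by norm_num)
  have hs2le : s2 ≤ 3/2 := by
    rw [hs2def]
    have h1 : Real.sqrt 2 ≤ Real.sqrt ((3/2)^2) := Real.sqrt_le_sqrt (by norm_num)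
    rwa [Real.sqrt_sq (by norm_num : (0:ℝ) ≤ 3/2)] at h1
  have hsqrt2x₀ : Real.sqrt (2 * x₀) = s2 * R := by
    rw [hs2def, hRdef]; exact Real.sqrt_mul (by norm_num) x₀
  by_cases hcase : δ ^ 2 < 48 * x₀ ^ ((3:ℝ)/2)
  · -- trivial case: δ small
    have hkey : x₀ ≤ 64 * x₀ ^ ((5:ℝ)/2) / δ ^ 2 := by
      rw [le_div_iff₀ (by positivity), h52, ← hR2]
      have hδ2 : δ ^ 2 ≤ 48 * R ^ 3 := by rw [h32] at hcase; linarith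
      have hmul : R ^ 2 * δ ^ 2 ≤ R ^ 2 * (48 * R ^ 3) :=
        mul_le_mul_of_nonneg_left hδ2 (sq_nonneg R)
      have hR5 : 0 ≤ R ^ 5 := by positivity
      linarith only [hmul, hR5]
    have hterm : 0 ≤ δ / 2 * S := mul_nonneg (by linarith only [hδ]) hSnn
    linarith only [hkey, hterm, hxx₀]
  · push_neg at hcase
    rw [h32] at hcase
    -- main case: δ² ≥ 48 R³
    -- reduce to showing bound with error κ*(1+x₀) for every κ > 0
    have hQnn : (0:ℝ) ≤ x₀ ^ ((5:ℝ)/2) / δ ^ 2 := by positivity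
    have hmain : ∀ κ : ℝ, 0 < κ →
        x ≤ δ / 2 * S + 20 * x₀ ^ ((5:ℝ)/2) / δ ^ 2 + κ * (1 + x₀) := by
      intro κ hκ
      -- geometric setup
      set ψh := Real.sqrt (12 * x₀ ^ ((3:ℝ)/2)) with hψhdef
      clear_value ψh
      have hψhpos : 0 < ψh := by rw [hψhdef]; exact Real.sqrt_pos.mpr (by positivity)
      have hψhsq : ψh ^ 2 = 12 * R ^ 3 := by
        rw [hψhdef, Real.sq_sqrt (by positivity), h32]
      have hψhδ2 : ψh ≤ δ / 2 := by
        rw [hψhdef]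
        have h1 : Real.sqrt (12 * x₀ ^ ((3:ℝ)/2)) ≤ Real.sqrt ((δ/2)^2) := by
          apply Real.sqrt_le_sqrt
          rw [h32]
          nlinarith only [hcase, sq_nonneg δ]
        rwa [Real.sqrt_sq (by linarith : (0:ℝ) ≤ δ/2)] at h1
      have hψhδ : ψh ≤ δ := by linarith
      set c1 : ℝ := 2 * x₀ / δ ^ 2 with hc1def
      set c2 : ℝ := 4 / ψh with hc2def
      set c3 : ℝ := 2 / ψh ^ 2 with hc3def
      clear_value c1 c2 c3
      have hc1nn : 0 ≤ c1 := by rw [hc1def]; positivity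
      have hc2nn : 0 ≤ c2 := by rw [hc2def]; positivity
      have hc3nn : 0 ≤ c3 := by rw [hc3def]; positivity
      set lam : ℝ := κ + Real.sqrt (2 * x₀) * (4 * x₀ / δ ^ 2 + 4 * x / ψh ^ 2) with hlamdef
      clear_value lam
      have hlamnn : 0 ≤ lam := by
        rw [hlamdef]
        have : 0 ≤ Real.sqrt (2 * x₀) * (4 * x₀ / δ ^ 2 + 4 * x / ψh ^ 2) := by positivity
        linarith
      set φ : ℝ → ℝ → ℝ :=
        fun t ψ => κ + S * ψ + c1 * ψ ^ 2 + t * (lam - c2 * ψ + c3 * ψ ^ 2) with hφdef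
      -- derivatives of φ
      have hφψ : ∀ t ψ : ℝ, HasDerivAt (fun ψ => φ t ψ)
          (S + 2 * c1 * ψ + t * (2 * c3 * ψ - c2)) ψ := by
        intro t ψ
        have hid : HasDerivAt (fun ψ : ℝ => ψ) 1 ψ := hasDerivAt_id ψ
        have hsq : HasDerivAt (fun ψ : ℝ => ψ ^ 2) (2 * ψ) ψ := by
          simpa using hasDerivAt_pow 2 ψ
        have h1 : HasDerivAt (fun ψ : ℝ => κ + S * ψ + c1 * ψ ^ 2 + t * (lam - c2 * ψ + c3 * ψ ^ 2))
            (0 + S * 1 + c1 * (2 * ψ) + t * (0 - c2 * 1 + c3 * (2 * ψ))) ψ := by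
          exact (((hasDerivAt_const ψ κ).add (hid.const_mul S)).add
            (hsq.const_mul c1)).add
            ((((hasDerivAt_const ψ lam).sub (hid.const_mul c2)).add
              (hsq.const_mul c3)).const_mul t)
        convert h1 using 1
        ring
      have hφψψ : ∀ t ψ : ℝ, HasDerivAt (fun ψ => S + 2 * c1 * ψ + t * (2 * c3 * ψ - c2))
          (2 * c1 + t * (2 * c3)) ψ := by
        intro t ψ
        have hid : HasDerivAt (fun ψ : ℝ => ψ) 1 ψ := hasDerivAt_id ψ
        have h1 : HasDerivAt (fun ψ : ℝ => S + 2 * c1 * ψ + t * (2 * c3 * ψ - c2))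
            (0 + 2 * c1 * 1 + t * (2 * c3 * 1 - 0)) ψ := by
          exact ((hasDerivAt_const ψ S).add (hid.const_mul (2 * c1))).add
            (((hid.const_mul (2 * c3)).sub (hasDerivAt_const ψ c2)).const_mul t)
        convert h1 using 1
        ring
      have hφt : ∀ t ψ : ℝ, HasDerivAt (fun t => φ t ψ) (lam - c2 * ψ + c3 * ψ ^ 2) t := by
        intro t ψ
        exact (hasDerivAt_mul_const (lam - c2 * ψ + c3 * ψ ^ 2)).const_add
          (κ + S * ψ + c1 * ψ ^ 2)
      -- initial bound: w 0 ψ ≤ S ψ on [0, δ]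
      have hw0S : ∀ ψ ∈ Icc (0:ℝ) δ, w 0 ψ ≤ S * ψ := by
        intro ψ hψ
        rcases eq_or_lt_of_le hψ.1 with h0 | h0
        · rw [← h0, hw0 0 ⟨le_refl 0, hX⟩, mul_zero]
        · refine le_of_forall_pos_le_add ?_
          intro ε hε
          have hK0c : IsCompact (Icc (0:ℝ) (X/2) ×ˢ Icc (0:ℝ) δ) :=
            isCompact_Icc.prod isCompact_Icc
          have hK0sub : Icc (0:ℝ) (X/2) ×ˢ Icc (0:ℝ) δ ⊆ Ico (0:ℝ) X ×ˢ Ici (0:ℝ) := by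
            rintro ⟨a, b⟩ ⟨ha, hb⟩
            exact ⟨⟨ha.1, lt_of_le_of_lt ha.2 (by linarith)⟩, hb.1⟩
          have hu1 := hK0c.uniformContinuousOn_of_continuous (hwc.mono hK0sub)
          have hu2 := hK0c.uniformContinuousOn_of_continuous (hpdyc.mono hK0sub)
          rw [Metric.uniformContinuousOn_iff] at hu1 hu2
          obtain ⟨d1, hd1, H1⟩ := hu1 (ε/2) (by linarith)
          obtain ⟨d2, hd2, H2⟩ := hu2 (ε/(2*δ)) (by positivity)
          set t : ℝ := min (min (d1/2) (d2/2)) (X/2) with htdef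
          have htpos : 0 < t :=
            lt_min (lt_min (by linarith) (by linarith)) (by linarith)
          have htX2 : t ≤ X/2 := min_le_right _ _
          have htX : t < X := lt_of_le_of_lt htX2 (by linarith)
          have htd1 : t < d1 := lt_of_le_of_lt ((min_le_left _ _).trans (min_le_left _ _)) (by linarith)
          have htd2 : t < d2 := lt_of_le_of_lt ((min_le_left _ _).trans (min_le_right _ _)) (by linarith)
          -- MVT in ψ at time t
          have hcontwt : ContinuousOn (w t) (Icc 0 ψ) := by
            have hmaps : MapsTo (fun q : ℝ => (t, q)) (Icc (0:ℝ) ψ) (Ico (0:ℝ) X ×ˢ Ici (0:ℝ)) :=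
              fun q hq => ⟨⟨htpos.le, htX⟩, hq.1⟩
            exact hwc.comp ((continuous_const.prodMk continuous_id).continuousOn) hmaps
          obtain ⟨ξ, hξ, hslope⟩ := exists_hasDerivAt_eq_slope (w t) (fun q => pdy w t q) h0
            hcontwt (fun q hq => (hdy t ⟨htpos, htX⟩ q hq.1).hasDerivAt)
          have hwt0 : w t 0 = 0 := hw0 t ⟨htpos.le, htX⟩
          have hξIcc : ξ ∈ Icc (0:ℝ) δ := ⟨hξ.1.le, le_trans hξ.2.le hψ.2⟩
          have hmem1 : ((t:ℝ), ξ) ∈ Icc (0:ℝ) (X/2) ×ˢ Icc (0:ℝ) δ :=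
            ⟨⟨htpos.le, htX2⟩, hξIcc⟩
          have hmem2 : ((0:ℝ), ξ) ∈ Icc (0:ℝ) (X/2) ×ˢ Icc (0:ℝ) δ :=
            ⟨⟨le_refl 0, by linarith⟩, hξIcc⟩
          have hdist2 : dist ((t, ξ) : ℝ × ℝ) ((0:ℝ), ξ) < d2 := by
            rw [Prod.dist_eq]
            simp only [dist_self, Real.dist_eq, sub_zero]
            rw [abs_of_pos htpos]
            exact lt_of_le_of_lt (max_le (le_refl t) htpos.le) htd2
          have hpd := H2 _ hmem1 _ hmem2 hdist2
          rw [Real.dist_eq] at hpd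
          have hpdle : pdy w t ξ ≤ S + ε/(2*δ) := by
            have h1 := (abs_lt.mp hpd).2
            have h2 := hSle ξ hξIcc
            linarith only [h1, h2]
          have hwtψ : w t ψ = ψ * pdy w t ξ := by
            have hψne : ψ ≠ 0 := ne_of_gt h0
            rw [hwt0, sub_zero, sub_zero] at hslope
            field_simp at hslope
            linarith only [hslope]
          -- closeness of w in time
          have hmem3 : ((t:ℝ), ψ) ∈ Icc (0:ℝ) (X/2) ×ˢ Icc (0:ℝ) δ :=
            ⟨⟨htpos.le, htX2⟩, hψ⟩
          have hmem4 : ((0:ℝ), ψ) ∈ Icc (0:ℝ) (X/2) ×ˢ Icc (0:ℝ) δ :=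
            ⟨⟨le_refl 0, by linarith⟩, hψ⟩
          have hdist1 : dist ((t, ψ) : ℝ × ℝ) ((0:ℝ), ψ) < d1 := by
            rw [Prod.dist_eq]
            simp only [dist_self, Real.dist_eq, sub_zero]
            rw [abs_of_pos htpos]
            exact lt_of_le_of_lt (max_le (le_refl t) htpos.le) htd1
          have hwd := H1 _ hmem3 _ hmem4 hdist1
          rw [Real.dist_eq] at hwd
          have hw0t : w 0 ψ ≤ w t ψ + ε/2 := by
            have h1 := (abs_lt.mp hwd).1
            linarith only [h1]
          have hψpos : 0 < ψ := h0
          have hψδ : ψ ≤ δ := hψ.2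
          have hfin : ψ * pdy w t ξ ≤ S * ψ + ε/2 := by
            have h1 : ψ * pdy w t ξ ≤ ψ * (S + ε/(2*δ)) :=
              mul_le_mul_of_nonneg_left hpdle hψpos.le
            have h2 : ψ * (ε/(2*δ)) ≤ ε/2 := by
              have heq : ψ * (ε/(2*δ)) = (ψ/δ) * (ε/2) := by
                field_simp
              have hψδ1 : ψ/δ ≤ 1 := (div_le_one hδ).mpr hψδ
              rw [heq]
              have h3 := mul_le_mul_of_nonneg_right hψδ1 (by linarith only [hε] : (0:ℝ) ≤ ε/2)
              linarith only [h3]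
            linarith only [h1, h2]
          rw [hwtψ] at hw0t
          linarith only [hw0t, hfin]
      -- compact box and the minimum point
      set K : Set (ℝ × ℝ) := Icc (0:ℝ) x ×ˢ Icc (0:ℝ) δ with hKdef
      have hKsub : K ⊆ Ico (0:ℝ) X ×ˢ Ici (0:ℝ) := by
        rintro ⟨a, b⟩ ⟨ha, hb⟩
        exact ⟨⟨ha.1, lt_of_le_of_lt ha.2 hxX⟩, hb.1⟩
      have hKc : IsCompact K := isCompact_Icc.prod isCompact_Icc
      have hφcont : Continuous (fun p : ℝ × ℝ => φ p.1 p.2) := by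
        simp only [hφdef]
        fun_prop
      have hfc : ContinuousOn (fun p : ℝ × ℝ => φ p.1 p.2 - w p.1 p.2) K :=
        (hφcont.continuousOn).sub (hwc.mono hKsub)
      have hKne : K.Nonempty := ⟨(0, 0), ⟨⟨le_refl 0, hx0⟩, ⟨le_refl 0, hδ.le⟩⟩⟩
      obtain ⟨p, hpK, hpmin'⟩ := hKc.exists_isMinOn hKne hfc
      have hpmin : ∀ q ∈ K, φ p.1 p.2 - w p.1 p.2 ≤ φ q.1 q.2 - w q.1 q.2 :=
        fun q hq => hpmin' hq
      obtain ⟨t0, ψ0⟩ := p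
      have ht0I : t0 ∈ Icc (0:ℝ) x := hpK.1
      have hψ0I : ψ0 ∈ Icc (0:ℝ) δ := hpK.2
      -- the minimum value is nonnegative
      have hmin0 : 0 ≤ φ t0 ψ0 - w t0 ψ0 := by
        have ht0Ico : t0 ∈ Ico (0:ℝ) X := ⟨ht0I.1, lt_of_le_of_lt ht0I.2 hxX⟩
        by_cases hψ00 : ψ0 = 0
        · subst hψ00
          rw [hw0 t0 ht0Ico]
          have hφ0 : φ t0 0 = κ + t0 * lam := by simp [hφdef]
          rw [hφ0]
          have ht0lam : 0 ≤ t0 * lam := mul_nonneg ht0I.1 hlamnn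
          linarith only [ht0lam, hκ.le]
        · by_cases hψ0δ : ψ0 = δ
          · rw [hψ0δ]
            have hwb := hbounds t0 ht0Ico δ hδ.le
            have hδc : c2 * δ ≤ c3 * δ ^ 2 := by
              rw [hc2def, hc3def]
              rw [div_mul_eq_mul_div, div_mul_eq_mul_div,
                div_le_div_iff₀ (by positivity) (by positivity)]
              have hh : 0 ≤ (δ * ψh) * (δ - 2 * ψh) :=
                mul_nonneg (mul_nonneg hδ.le hψhpos.le) (by linarith only [hψhδ2, hδ])
              nlinarith only [hh]
            have hc1δ : c1 * δ ^ 2 = 2 * x₀ := by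
              rw [hc1def]
              field_simp
            have h1 : 0 ≤ t0 * (lam - c2 * δ + c3 * δ ^ 2) :=
              mul_nonneg ht0I.1 (by linarith only [hlamnn, hδc])
            have h2 : 0 ≤ S * δ := mul_nonneg hSnn hδ.le
            simp only [hφdef]
            linarith only [hwb.2, h1, h2, hc1δ, ht0I.1, hκ.le]
          · by_cases ht00 : t0 = 0
            · subst ht00
              have hwle := hw0S ψ0 hψ0I
              simp only [hφdef]
              have h00 : (0:ℝ) * (lam - c2 * ψ0 + c3 * ψ0 ^ 2) = 0 := zero_mul _
              linarith only [hwle, mul_nonneg hc1nn (sq_nonneg ψ0), h00, hκ.le]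
            · -- interior point: contradiction with the equation
              exfalso
              have ht0pos : 0 < t0 := lt_of_le_of_ne ht0I.1 (Ne.symm ht00)
              have hψ0pos : 0 < ψ0 := lt_of_le_of_ne hψ0I.1 (Ne.symm hψ00)
              have hψ0lt : ψ0 < δ := lt_of_le_of_ne hψ0I.2 hψ0δ
              have ht0X : t0 ∈ Ioo (0:ℝ) X := ⟨ht0pos, lt_of_le_of_lt ht0I.2 hxX⟩
              have hψ0Ioi : ψ0 ∈ Ioi (0:ℝ) := hψ0pos
              -- ψ-direction: second derivative test
              set k : ℝ → ℝ := fun ψ => φ t0 ψ - w t0 ψ with hkdef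
              have hkdiff : ∀ ψ₁ ∈ Ioi (0:ℝ), DifferentiableAt ℝ k ψ₁ := by
                intro ψ₁ hψ₁
                exact ((hφψ t0 ψ₁).differentiableAt).sub (hdy t0 ht0X ψ₁ hψ₁)
              have hkd : ∀ ψ₁ ∈ Ioi (0:ℝ), deriv k ψ₁ =
                  (S + 2 * c1 * ψ₁ + t0 * (2 * c3 * ψ₁ - c2)) - deriv (w t0) ψ₁ := by
                intro ψ₁ hψ₁
                exact ((hφψ t0 ψ₁).sub (hdy t0 ht0X ψ₁ hψ₁).hasDerivAt).deriv
              have hIoimem : Ioi (0:ℝ) ∈ nhds ψ0 := Ioi_mem_nhds hψ0pos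
              have hkdEq : deriv k =ᶠ[nhds ψ0]
                  (fun ψ₁ => (S + 2 * c1 * ψ₁ + t0 * (2 * c3 * ψ₁ - c2)) - deriv (w t0) ψ₁) :=
                eventuallyEq_of_mem hIoimem hkd
              have hrhsdiff : DifferentiableAt ℝ
                  (fun ψ₁ => (S + 2 * c1 * ψ₁ + t0 * (2 * c3 * ψ₁ - c2)) - deriv (w t0) ψ₁) ψ0 :=
                ((hφψψ t0 ψ0).differentiableAt).sub (hdyy t0 ht0X ψ0 hψ0pos)
              have hkd2diff : DifferentiableAt ℝ (deriv k) ψ0 :=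
                (hkdEq.differentiableAt_iff).mpr hrhsdiff
              have hlocmin : IsLocalMin k ψ0 := by
                have hIoo : Ioo (0:ℝ) δ ∈ nhds ψ0 := Ioo_mem_nhds hψ0pos hψ0lt
                filter_upwards [hIoo] with ψ₁ hψ₁
                exact hpmin (t0, ψ₁) ⟨ht0I, ⟨hψ₁.1.le, hψ₁.2.le⟩⟩
              have h2nd : 0 ≤ deriv (deriv k) ψ0 :=
                aux_second_deriv_nonneg hlocmin
                  (eventually_of_mem hIoimem hkdiff) hkd2diff
              rw [hkdEq.deriv_eq] at h2nd
              have hrhsderiv : deriv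
                  (fun ψ₁ => (S + 2 * c1 * ψ₁ + t0 * (2 * c3 * ψ₁ - c2)) - deriv (w t0) ψ₁) ψ0 =
                  (2 * c1 + t0 * (2 * c3)) - pdyy w t0 ψ0 :=
                ((hφψψ t0 ψ0).sub (hdyy t0 ht0X ψ0 hψ0pos).hasDerivAt).deriv
              rw [hrhsderiv] at h2nd
              have hyy : pdyy w t0 ψ0 ≤ 2 * c1 + 2 * t0 * c3 := by linarith only [h2nd]
              -- t-direction: derivative nonpositive at interior/right-edge minimum
              have hjd : HasDerivAt (fun r => φ r ψ0 - w r ψ0)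
                  ((lam - c2 * ψ0 + c3 * ψ0 ^ 2) - pdx w t0 ψ0) t0 :=
                (hφt t0 ψ0).sub (hdx t0 ht0X ψ0 hψ0pos).hasDerivAt
              have hjmin : ∀ r ∈ Ioo (0:ℝ) t0,
                  (fun r => φ r ψ0 - w r ψ0) t0 ≤ (fun r => φ r ψ0 - w r ψ0) r := by
                intro r hr
                exact hpmin (r, ψ0) ⟨⟨hr.1.le, le_trans hr.2.le ht0I.2⟩, hψ0I⟩
              have hjle : deriv (fun r => φ r ψ0 - w r ψ0) t0 ≤ 0 :=
                aux_deriv_nonpos_left_min ht0pos hjd.differentiableAt hjmin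
              rw [hjd.deriv] at hjle
              have htle : lam - c2 * ψ0 + c3 * ψ0 ^ 2 ≤ pdx w t0 ψ0 := by
                linarith only [hjle]
              -- the equation
              have hpdeq := hpde t0 ht0X ψ0 hψ0pos
              have hwb := hbounds t0 ⟨ht0pos.le, ht0X.2⟩ ψ0 hψ0pos.le
              have hsqw_nn : 0 ≤ Real.sqrt (w t0 ψ0) := Real.sqrt_nonneg _
              have hsqw_le : Real.sqrt (w t0 ψ0) ≤ Real.sqrt (2 * x₀) := by
                apply Real.sqrt_le_sqrt
                linarith only [hwb.2, ht0I.1, hx₀]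
              have hφψψnn : 0 ≤ 2 * c1 + 2 * t0 * c3 := by
                have h := mul_nonneg ht0pos.le hc3nn
                linarith only [h, hc1nn]
              have hchain : Real.sqrt (w t0 ψ0) * pdyy w t0 ψ0 ≤
                  Real.sqrt (2 * x₀) * (2 * c1 + 2 * x * c3) := by
                have h1 : Real.sqrt (w t0 ψ0) * pdyy w t0 ψ0 ≤
                    Real.sqrt (w t0 ψ0) * (2 * c1 + 2 * t0 * c3) :=
                  mul_le_mul_of_nonneg_left hyy hsqw_nn
                have h2 : Real.sqrt (w t0 ψ0) * (2 * c1 + 2 * t0 * c3) ≤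
                    Real.sqrt (2 * x₀) * (2 * c1 + 2 * t0 * c3) :=
                  mul_le_mul_of_nonneg_right hsqw_le hφψψnn
                have h3 : Real.sqrt (2 * x₀) * (2 * c1 + 2 * t0 * c3) ≤
                    Real.sqrt (2 * x₀) * (2 * c1 + 2 * x * c3) := by
                  apply mul_le_mul_of_nonneg_left _ (Real.sqrt_nonneg _)
                  have h4 : t0 * c3 ≤ x * c3 := mul_le_mul_of_nonneg_right ht0I.2 hc3nn
                  linarith only [h4]
                linarith only [h1, h2, h3]
              have hlamid : Real.sqrt (2 * x₀) * (2 * c1 + 2 * x * c3) = lam - κ := by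
                rw [hlamdef, hc1def, hc3def]
                ring
              -- quadratic inequality in ψ0
              have hquad : lam - 2 ≤ lam - c2 * ψ0 + c3 * ψ0 ^ 2 := by
                have hkey : c2 * ψ0 ≤ c3 * ψ0 ^ 2 + 2 := by
                  rw [hc2def, hc3def]
                  rw [div_mul_eq_mul_div, div_mul_eq_mul_div, div_add' _ _ _ (by positivity),
                    div_le_div_iff₀ (by positivity) (by positivity)]
                  nlinarith only [mul_nonneg (sq_nonneg (ψ0 - ψh)) hψhpos.le]
                linarith only [hkey]
              have hpdxval : pdx w t0 ψ0 = Real.sqrt (w t0 ψ0) * pdyy w t0 ψ0 - 2 := by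
                linarith only [hpdeq]
              rw [hpdxval] at htle
              rw [hlamid] at hchain
              linarith only [hquad, htle, hchain, hκ]
      -- conclude from nonnegativity of φ - w at (x, ψh)
      have hxψhK : ((x:ℝ), ψh) ∈ K := ⟨⟨hx0, le_refl x⟩, ⟨hψhpos.le, hψhδ⟩⟩
      have hminx := hpmin (x, ψh) hxψhK
      have hwxnn : 0 ≤ w x ψh := (hbounds x hx ψh hψhpos.le).1
      have hminx' : φ t0 ψ0 - w t0 ψ0 ≤ φ x ψh - w x ψh := hminx
      have hφnn : 0 ≤ φ x ψh := by linarith only [hmin0, hminx', hwxnn]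
      -- expand φ x ψh
      have hc2ψh : c2 * ψh = 4 := by
        rw [hc2def]; field_simp
      have hc3ψh : c3 * ψh ^ 2 = 2 := by
        rw [hc3def]; field_simp
      have hφval : φ x ψh = κ + S * ψh + c1 * ψh ^ 2 + x * (lam - 2) := by
        simp only [hφdef]
        linear_combination x * hc3ψh - x * hc2ψh
      rw [hφval] at hφnn
      -- estimates on the coefficient terms
      have hSψh : S * ψh ≤ S * (δ / 2) := mul_le_mul_of_nonneg_left hψhδ2 hSnn
      have hc1ψh : c1 * ψh ^ 2 = 24 * (R ^ 5) / δ ^ 2 := by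
        rw [hc1def, hψhsq, ← hR2]
        field_simp
        ring
      have hδ2pos : (0:ℝ) < δ ^ 2 := by positivity
      have hxlam : x * lam ≤ κ * x₀ + 6 * (R ^ 5) / δ ^ 2 + x / 2 := by
        rw [hlamdef, hsqrt2x₀]
        have hterm1 : x * (s2 * R * (4 * x₀ / δ ^ 2)) ≤ 6 * (R ^ 5) / δ ^ 2 := by
          have heq : x * (s2 * R * (4 * x₀ / δ ^ 2)) = (x * s2 * R * 4 * x₀) / δ ^ 2 := by
            ring
          rw [heq, div_le_div_iff₀ hδ2pos hδ2pos, ← hR2]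
          have hxR : x ≤ R ^ 2 := by rw [hR2]; exact hxx₀
          have e1 : x * s2 ≤ R ^ 2 * (3/2) := mul_le_mul hxR hs2le hs2nn (by positivity)
          have e3 : (x * s2) * (4 * R * (R ^ 2) * δ ^ 2) ≤
              (R ^ 2 * (3/2)) * (4 * R * (R ^ 2) * δ ^ 2) :=
            mul_le_mul_of_nonneg_right e1 (by positivity)
          linarith only [e3]
        have hterm2 : x * (s2 * R * (4 * x / ψh ^ 2)) ≤ x / 2 := by
          rw [hψhsq]
          have heq : x * (s2 * R * (4 * x / (12 * R ^ 3))) = (x * s2 * x) / (3 * R ^ 2) := by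
            field_simp
            ring
          rw [heq, div_le_div_iff₀ (by positivity : (0:ℝ) < 3 * R ^ 2) (by norm_num : (0:ℝ) < 2)]
          have hxR : x ≤ R ^ 2 := by rw [hR2]; exact hxx₀
          have f1 : s2 * x ^ 2 ≤ (3/2) * x ^ 2 := mul_le_mul_of_nonneg_right hs2le (sq_nonneg x)
          have f2 : x * x ≤ x * R ^ 2 := mul_le_mul_of_nonneg_left hxR hx0
          linarith only [f1, f2]
        have hterm0 : x * κ ≤ κ * x₀ := by
          have h5 : 0 ≤ (x₀ - x) * κ := mul_nonneg (by linarith only [hxx₀]) hκ.le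
          linarith only [h5]
        linarith only [hterm0, hterm1, hterm2]
      -- final assembly
      obtain ⟨T, hTdef⟩ : ∃ T : ℝ, T = R ^ 5 / δ ^ 2 := ⟨_, rfl⟩
      have hTnn : 0 ≤ T := by rw [hTdef]; positivity
      have h24 : 24 * (R ^ 5) / δ ^ 2 = 24 * T := by rw [hTdef]; ring
      have h6 : 6 * (R ^ 5) / δ ^ 2 = 6 * T := by rw [hTdef]; ring
      have hgoal : 20 * x₀ ^ ((5:ℝ)/2) / δ ^ 2 = 20 * T := by rw [h52, hTdef]; ring
      rw [hgoal]
      have hfinal : 2 * x ≤ κ + S * (δ / 2) + 24 * T + (κ * x₀ + 6 * T + x / 2) := by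
        linarith only [hφnn, hc1ψh.le, hc1ψh.ge, hSψh, hxlam, h24.le, h24.ge, h6.le, h6.ge]
      have hSδnn : 0 ≤ δ / 2 * S := mul_nonneg (by linarith only [hδ]) hSnn
      linarith only [hfinal, hSδnn, hTnn, (mul_pos hκ hx₀).le, hκ.le]
    -- pass to the limit κ → 0
    have hlim : x ≤ δ / 2 * S + 20 * x₀ ^ ((5:ℝ)/2) / δ ^ 2 := by
      refine le_of_forall_pos_le_add ?_
      intro ε hε
      have h1x₀ : (0:ℝ) < 1 + x₀ := by linarith
      have := hmain (ε / (1 + x₀)) (by positivity)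
      have heq : ε / (1 + x₀) * (1 + x₀) = ε := by field_simp
      linarith only [this, heq.le, heq.ge]
    have h20 : 20 * x₀ ^ ((5:ℝ)/2) / δ ^ 2 ≤ 64 * x₀ ^ ((5:ℝ)/2) / δ ^ 2 := by
      have hA : (0:ℝ) ≤ x₀ ^ ((5:ℝ)/2) := (Real.rpow_pos_of_pos hx₀ _).le
      have hAδ : 0 ≤ x₀ ^ ((5:ℝ)/2) / δ ^ 2 := by positivity
      rw [div_le_div_iff₀ (by positivity) (by positivity)]
      linarith only [mul_nonneg hA (sq_nonneg δ)]
    linarith only [hlim, h20]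
end

section
/- Let M₁ > 0, Y > 0, and let h : [0,Y] → ℝ be twice continuously differentiable with h(0) = 0, h'(y) ≥ 0 for all y ∈ [0,Y], and h''(y) ≤ M₁ for all y ∈ [0,Y]. Suppose there exists y₂ ∈ [0,Y) with h'(y₂) = h'(Y)/2 and h'(y) ≥ h'(Y)/2 for all y ∈ [y₂, Y]. Then ∫₀^Y h(y) dy ≥ h'(Y)³/(16 M₁²). -/
open Set Filter

/-- Key pointwise estimate: if `h(0) = 0`, `h' ≥ 0`, `h'' ≤ M₁` on `[0,Y]`, and
the slope stays above half of `h'(Y)` on `[y₂,Y]` with `h'(y₂) = h'(Y)/2`, then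
`∫₀^Y h ≥ h'(Y)³/(16 M₁²)`. -/
theorem slope_cube_estimate (M₁ Y y₂ : ℝ) (hM₁ : 0 < M₁) (hY : 0 < Y) (h : ℝ → ℝ)
    (hreg : ContDiffOn ℝ 2 h (Icc 0 Y))
    (h0 : h 0 = 0)
    (hmono : ∀ y ∈ Icc (0:ℝ) Y, 0 ≤ derivWithin h (Icc 0 Y) y)
    (hconc : ∀ y ∈ Icc (0:ℝ) Y, derivWithin (derivWithin h (Icc 0 Y)) (Icc 0 Y) y ≤ M₁)
    (hy₂ : y₂ ∈ Ico (0:ℝ) Y)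
    (hhalf : derivWithin h (Icc 0 Y) y₂ = derivWithin h (Icc 0 Y) Y / 2)
    (habove : ∀ y ∈ Icc y₂ Y,
      derivWithin h (Icc 0 Y) Y / 2 ≤ derivWithin h (Icc 0 Y) y) :
    (derivWithin h (Icc 0 Y) Y) ^ 3 / (16 * M₁ ^ 2) ≤ ∫ y in (0:ℝ)..Y, h y := by
  have hUD : UniqueDiffOn ℝ (Icc (0:ℝ) Y) := uniqueDiffOn_Icc hY
  set g := derivWithin h (Icc (0:ℝ) Y) with hg_def
  set s := g Y with hs_def
  have hYmem : (Y:ℝ) ∈ Icc (0:ℝ) Y := ⟨hY.le, le_rfl⟩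
  have hs0 : 0 ≤ s := hmono Y hYmem
  have hcont : ContinuousOn h (Icc 0 Y) := hreg.continuousOn
  have hdiff : DifferentiableOn ℝ h (Icc 0 Y) := hreg.differentiableOn (by norm_num)
  have hgC : ContDiffOn ℝ 1 g (Icc 0 Y) := hreg.derivWithin hUD (by norm_num)
  have hmemx : ∀ x ∈ Ioo (0:ℝ) Y, Icc (0:ℝ) Y ∈ nhds x := fun x hx => Icc_mem_nhds hx.1 hx.2
  have hdx : ∀ x ∈ Ioo (0:ℝ) Y, HasDerivAt h (g x) x := fun x hx =>
    ((hdiff x (Ioo_subset_Icc_self hx)).hasDerivWithinAt).hasDerivAt (hmemx x hx)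
  have hgx : ∀ x ∈ Ioo (0:ℝ) Y, HasDerivAt g (derivWithin g (Icc 0 Y) x) x := fun x hx =>
    (((hgC.differentiableOn one_ne_zero) x (Ioo_subset_Icc_self hx)).hasDerivWithinAt).hasDerivAt
      (hmemx x hx)
  have hsub : Icc y₂ Y ⊆ Icc (0:ℝ) Y := Icc_subset_Icc hy₂.1 le_rfl
  have hsubo : Ioo y₂ Y ⊆ Ioo (0:ℝ) Y := Ioo_subset_Ioo hy₂.1 le_rfl
  -- h is monotone on [0, Y]
  have hmonoOn : MonotoneOn h (Icc 0 Y) := by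
    apply monotoneOn_of_deriv_nonneg (convex_Icc 0 Y) hcont
    · rw [interior_Icc]
      exact fun x hx => ((hdx x hx).differentiableAt).differentiableWithinAt
    · rw [interior_Icc]
      intro x hx
      rw [(hdx x hx).deriv]
      exact hmono x (Ioo_subset_Icc_self hx)
  have hnonneg : ∀ y ∈ Icc (0:ℝ) Y, 0 ≤ h y := by
    intro y hy
    have := hmonoOn ⟨le_rfl, hY.le⟩ hy hy.1
    rwa [h0] at this
  -- slope gap:  s/2 ≤ M₁ (Y - y₂)
  have hFmono : MonotoneOn (fun y => M₁ * y - g y) (Icc y₂ Y) := by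
    apply monotoneOn_of_deriv_nonneg (convex_Icc _ _)
    · exact (continuousOn_const.mul continuousOn_id).sub (hgC.continuousOn.mono hsub)
    · rw [interior_Icc]
      intro x hx
      exact (((hasDerivAt_id x).const_mul M₁).sub
        (hgx x (hsubo hx))).differentiableAt.differentiableWithinAt
    · rw [interior_Icc]
      intro x hx
      have hF : HasDerivAt (fun y => M₁ * y - g y) (M₁ - derivWithin g (Icc 0 Y) x) x := by
        exact (((hasDerivAt_id x).const_mul M₁).sub (hgx x (hsubo hx))).congr_deriv (by ring)
      rw [hF.deriv]
      have := hconc x (Ioo_subset_Icc_self (hsubo hx))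
      linarith
  have hd1 : s / 2 ≤ M₁ * (Y - y₂) := by
    have := hFmono ⟨le_rfl, hy₂.2.le⟩ ⟨hy₂.2.le, le_rfl⟩ hy₂.2.le
    simp only [] at this
    rw [hhalf] at this
    linarith
  -- pointwise lower bound on [y₂, Y]
  have hφmono : MonotoneOn (fun y => h y - s / 2 * (y - y₂)) (Icc y₂ Y) := by
    apply monotoneOn_of_deriv_nonneg (convex_Icc _ _)
    · exact (hcont.mono hsub).sub (continuousOn_const.mul
        (continuousOn_id.sub continuousOn_const))
    · rw [interior_Icc]
      intro x hx
      exact ((hdx x (hsubo hx)).sub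
        (((hasDerivAt_id x).sub_const y₂).const_mul (s / 2))).differentiableAt.differentiableWithinAt
    · rw [interior_Icc]
      intro x hx
      have hG : HasDerivAt (fun y => h y - s / 2 * (y - y₂)) (g x - s / 2) x := by
        have := (hdx x (hsubo hx)).sub
          (((hasDerivAt_id x).sub_const y₂).const_mul (s / 2))
        exact this.congr_deriv (by ring)
      rw [hG.deriv]
      have := habove x (Ioo_subset_Icc_self hx)
      linarith
  have hy₂nn : 0 ≤ h y₂ := hnonneg y₂ (hsub ⟨le_rfl, hy₂.2.le⟩)
  have hφ : ∀ y ∈ Icc y₂ Y, s / 2 * (y - y₂) ≤ h y := by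
    intro y hy
    have h1 := hφmono ⟨le_rfl, hy₂.2.le⟩ hy hy.1
    simp only [sub_self, mul_zero, sub_zero] at h1
    linarith
  -- integrals
  have hInt1 : IntervalIntegrable h MeasureTheory.volume 0 y₂ :=
    (hcont.mono (by rw [uIcc_of_le hy₂.1]; exact Icc_subset_Icc le_rfl hy₂.2.le)).intervalIntegrable
  have hInt2 : IntervalIntegrable h MeasureTheory.volume y₂ Y :=
    (hcont.mono (by rw [uIcc_of_le hy₂.2.le]; exact hsub)).intervalIntegrable
  have hsplit : ∫ y in (0:ℝ)..Y, h y = (∫ y in (0:ℝ)..y₂, h y) + ∫ y in y₂..Y, h y :=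
    (intervalIntegral.integral_add_adjacent_intervals hInt1 hInt2).symm
  have hI1 : 0 ≤ ∫ y in (0:ℝ)..y₂, h y := by
    apply intervalIntegral.integral_nonneg hy₂.1
    intro y hy
    exact hnonneg y ⟨hy.1, hy.2.trans hy₂.2.le⟩
  have hlinInt : IntervalIntegrable (fun y => s / 2 * (y - y₂)) MeasureTheory.volume y₂ Y :=
    (Continuous.intervalIntegrable (by continuity) _ _)
  have hI2 : (∫ y in y₂..Y, s / 2 * (y - y₂)) ≤ ∫ y in y₂..Y, h y :=
    intervalIntegral.integral_mono_on hy₂.2.le hlinInt hInt2 hφ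
  have hlin : (∫ y in y₂..Y, s / 2 * (y - y₂)) = s / 2 * ((Y - y₂) ^ 2 / 2) := by
    rw [intervalIntegral.integral_const_mul]
    have h2 : (∫ y in y₂..Y, (y - y₂)) = (Y - y₂) ^ 2 / 2 := by
      rw [intervalIntegral.integral_comp_sub_right (fun x => x) y₂, integral_id]
      ring
    rw [h2]
  rw [hsplit]
  rw [hlin] at hI2
  have hd0 : 0 ≤ Y - y₂ := by linarith [hy₂.2.le]
  have key : s ^ 3 / (16 * M₁ ^ 2) ≤ s / 2 * ((Y - y₂) ^ 2 / 2) := by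
    rw [div_le_iff₀ (by positivity)]
    nlinarith [mul_le_mul hd1 hd1 (by linarith) (by positivity), mul_nonneg hs0 hs0,
      mul_nonneg hM₁.le hd0, sq_nonneg (Y - y₂)]
  linarith
end
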